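/- The softmax map σ : ℝ^n → ℝ^n defined by σ(z)_i = exp(z_i) / Σ_{j=1}^n exp(z_j) is 1-Lipschitz with respect to the Euclidean norm: for all z, z' ∈ ℝ^n, ‖σ(z) − σ(z')‖₂ ≤ ‖z − z'‖₂. -/

import Mathlib

/-- The softmax map on `ℝ^n`: `softmax z i = exp (z i) / Σ_j exp (z j)`. -/
noncomputable def softmax {n : ℕ} (z : EuclideanSpace ℝ (Fin n)) :
    EuclideanSpace ℝ (Fin n) :=
  WithLp.toLp 2 (fun i => Real.exp (z i) / ∑ j, Real.exp (z j))

/-!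
The Jacobian of softmax at `z` is `diag p - p pᵀ` with `p = softmax z` a probability vector; it
sends `v` to `p ⊙ (v - ⟨p, v⟩ 𝟙)`. Since `0 ≤ pᵢ ≤ 1`, its squared norm is at most
`∑ pᵢ (vᵢ - ⟨p, v⟩)² = ∑ pᵢ vᵢ² - ⟨p, v⟩² ≤ ∑ vᵢ²`, so the Jacobian has operator norm at most `1`
and the mean value inequality makes softmax 1-Lipschitz.
-/

open Finset Matrix

section ProbabilityVector

variable {ι : Type*} [Fintype ι] {p : ι → ℝ}

theorem sum_mul_sub_sq_eq (hp1 : ∑ i, p i = 1) (v : ι → ℝ) :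
    ∑ i, p i * (v i - ∑ j, p j * v j) ^ 2 = ∑ i, p i * v i ^ 2 - (∑ j, p j * v j) ^ 2 := by
  set m := ∑ j, p j * v j
  have expand : ∀ i, p i * (v i - m) ^ 2 = p i * v i ^ 2 - 2 * m * (p i * v i) + m ^ 2 * p i :=
    fun i => by ring
  simp only [expand, sum_add_distrib, sum_sub_distrib, ← mul_sum, hp1]
  ring

theorem sum_sq_mul_sub_le_sum_sq (hp0 : ∀ i, 0 ≤ p i) (hp1 : ∑ i, p i = 1) (v : ι → ℝ) :
    ∑ i, (p i * (v i - ∑ j, p j * v j)) ^ 2 ≤ ∑ i, v i ^ 2 := by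
  have hp_le_one : ∀ i, p i ≤ 1 := fun i => hp1 ▸ single_le_sum (fun j _ => hp0 j) (mem_univ i)
  set m := ∑ j, p j * v j
  calc ∑ i, (p i * (v i - m)) ^ 2 ≤ ∑ i, p i * (v i - m) ^ 2 :=
        sum_le_sum fun i _ => mul_pow (p i) _ 2 ▸
          mul_le_mul_of_nonneg_right (sq_le (hp0 i) (hp_le_one i)) (sq_nonneg _)
    _ = ∑ i, p i * v i ^ 2 - m ^ 2 := sum_mul_sub_sq_eq hp1 v
    _ ≤ ∑ i, p i * v i ^ 2 := sub_le_self _ (sq_nonneg m)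
    _ ≤ ∑ i, v i ^ 2 := sum_le_sum fun i _ => mul_le_of_le_one_left (sq_nonneg _) (hp_le_one i)

end ProbabilityVector

section Jacobian

variable {ι : Type*} [Fintype ι] [DecidableEq ι]

noncomputable def softmaxJacobian (p : ι → ℝ) : EuclideanSpace ℝ ι →L[ℝ] EuclideanSpace ℝ ι :=
  toEuclideanCLM (n := ι) (𝕜 := ℝ) (diagonal p - vecMulVec p p)

theorem softmaxJacobian_apply (p : ι → ℝ) (v : EuclideanSpace ℝ ι) (i : ι) :
    softmaxJacobian p v i = p i * (v i - ∑ j, p j * v j) := by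
  simp only [softmaxJacobian, ofLp_toEuclideanCLM, sub_mulVec, Pi.sub_apply, mulVec_diagonal,
    vecMulVec_mulVec, Pi.smul_apply, MulOpposite.smul_eq_mul_unop, MulOpposite.unop_op, dotProduct]
  ring

theorem norm_softmaxJacobian_le_one {p : ι → ℝ} (hp0 : ∀ i, 0 ≤ p i) (hp1 : ∑ i, p i = 1) :
    ‖softmaxJacobian p‖ ≤ 1 := by
  refine ContinuousLinearMap.opNorm_le_bound _ zero_le_one fun v => ?_
  rw [one_mul, EuclideanSpace.norm_eq, EuclideanSpace.norm_eq]
  refine Real.sqrt_le_sqrt ?_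
  simpa only [softmaxJacobian_apply, Real.norm_eq_abs, sq_abs] using
    sum_sq_mul_sub_le_sum_sq hp0 hp1 v.ofLp

end Jacobian

section Softmax

variable {n : ℕ}

theorem sum_exp_pos {ι : Type*} [Fintype ι] [Nonempty ι] (z : ι → ℝ) :
    0 < ∑ j, Real.exp (z j) :=
  sum_pos (fun _ _ => Real.exp_pos _) univ_nonempty

theorem softmax_apply (z : EuclideanSpace ℝ (Fin n)) (i : Fin n) :
    softmax z i = Real.exp (z i) / ∑ j, Real.exp (z j) := rfl

theorem softmax_nonneg (z : EuclideanSpace ℝ (Fin n)) (i : Fin n) : 0 ≤ softmax z i := by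
  rw [softmax_apply]
  positivity

theorem sum_softmax [NeZero n] (z : EuclideanSpace ℝ (Fin n)) : ∑ i, softmax z i = 1 := by
  simp only [softmax_apply, ← sum_div, div_self (sum_exp_pos _).ne']

theorem hasFDerivAt_softmax [NeZero n] (z : EuclideanSpace ℝ (Fin n)) :
    HasFDerivAt softmax (softmaxJacobian (softmax z).ofLp) z := by
  rw [← hasFDerivWithinAt_univ, hasFDerivWithinAt_piLp]
  intro i
  rw [hasFDerivWithinAt_univ]
  have hexp : ∀ k, HasFDerivAt (fun y : EuclideanSpace ℝ (Fin n) => Real.exp (y k))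
      (Real.exp (z k) • EuclideanSpace.proj k) z :=
    fun k => (PiLp.hasFDerivAt_apply 2 z k).exp
  have hsum := HasFDerivAt.fun_sum (u := univ) fun j _ => hexp j
  have hquot := (hexp i).mul ((hasDerivAt_inv (sum_exp_pos z).ne').comp_hasFDerivAt z hsum)
  have hfun : (fun y : EuclideanSpace ℝ (Fin n) => softmax y i) =
      fun y => Real.exp (y i) * (∑ j, Real.exp (y j))⁻¹ :=
    funext fun y => div_eq_mul_inv _ _
  rw [hfun]
  refine hquot.congr_fderiv ?_
  ext v
  simp only [ContinuousLinearMap.comp_apply, softmaxJacobian_apply, softmax_apply,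
    PiLp.proj_apply, _root_.add_apply, _root_.smul_apply, _root_.sum_apply, Function.comp_apply,
    smul_eq_mul, div_mul_eq_mul_div, ← sum_div]
  field_simp
  ring

theorem lipschitzWith_one_softmax [NeZero n] : LipschitzWith 1 (softmax (n := n)) :=
  lipschitzWith_of_nnnorm_fderiv_le (fun z => (hasFDerivAt_softmax z).differentiableAt) fun z => by
    rw [(hasFDerivAt_softmax z).fderiv, ← NNReal.coe_le_coe, coe_nnnorm, NNReal.coe_one]
    exact norm_softmaxJacobian_le_one (softmax_nonneg z) (sum_softmax z)

end Softmax

/-- Softmax is 1-Lipschitz with respect to the Euclidean norm. -/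
theorem stmt16 (n : ℕ) (hn : 0 < n) (z z' : EuclideanSpace ℝ (Fin n)) :
    ‖softmax z - softmax z'‖ ≤ ‖z - z'‖ := by
  have : NeZero n := ⟨hn.ne'⟩
  simpa using lipschitzWith_one_softmax.norm_sub_le z z'
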